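/- Let {a_s + n_s ℤ}_{s=1}^k be a disjoint cover of ℤ. For each t ∈ {1,…,k} and each r ∈ {0,1,…,n_t − 1} there exists a subset I ⊆ {1,…,k} \ {t} with ∑_{s∈I} 1/n_s = r/n_t. -/

import Mathlib

/-!
Put `L = lcm n_s`, `m_s = L / n_s`, and let `ζ` be a primitive `L`-th root of unity. The polynomial
`G = ∏_s (1 - ζ^(-a_s m_s) X^(m_s))` vanishes at every `ζ^j`, since the class containing `j` kills
its factor, and has degree `∑ m_s ≤ L` because the classes are disjoint; as `G(0) = 1` this forces
`G = 1 - X^L`. Dividing out the factor of `t` leaves `∑_{i < n_t} (ζ^(-a_t m_t) X^(m_t))^i`, whose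
coefficient of `X^(r m_t)` is nonzero. Expanding the remaining product, that coefficient is a sum
over the sets `I ∌ t` with `∑_{s ∈ I} m_s = r m_t`, so one of them exists, and dividing by `L` gives
`∑_{s ∈ I} 1 / n_s = r / n_t`.
-/

open Polynomial Finset

def IsDisjointCover {ι : Type*} (a : ι → ℤ) (n : ι → ℕ) : Prop :=
  ∀ x : ℤ, ∃! s, (n s : ℤ) ∣ x - a s

theorem Int.card_filter_Ico_modEq_of_dvd {n L : ℕ} (hn : 0 < n) (hnL : n ∣ L) (v : ℤ) :
    #{x ∈ Ico (0 : ℤ) L | x ≡ v [ZMOD n]} = L / n := by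
  obtain ⟨m, rfl⟩ := hnL
  have hcard := Int.Ico_filter_modEq_card 0 ((n * m : ℕ) : ℤ) (Int.natCast_pos.mpr hn) v
  have hshift : (((n * m : ℕ) : ℤ) - v : ℚ) / ((n : ℤ) : ℚ)
      = (m : ℤ) + ((0 : ℤ) - v : ℚ) / ((n : ℤ) : ℚ) := by
    have : (n : ℚ) ≠ 0 := by exact_mod_cast hn.ne'
    push_cast
    field_simp
    ring
  rw [hshift, Int.ceil_intCast_add] at hcard
  rw [Nat.mul_div_cancel_left m hn]
  omega

theorem sum_div_le_of_disjoint_classes {ι : Type*} [Fintype ι] {a : ι → ℤ} {n : ι → ℕ}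
    (hn : ∀ s, 0 < n s) (hdisj : ∀ x : ℤ, {s | (n s : ℤ) ∣ x - a s}.Subsingleton)
    {L : ℕ} (hnL : ∀ s, n s ∣ L) : ∑ s, L / n s ≤ L := by
  let A : ι → Finset ℤ := fun s => {x ∈ Ico (0 : ℤ) L | x ≡ a s [ZMOD n s]}
  have hA : ((univ : Finset ι) : Set ι).PairwiseDisjoint A := by
    intro s _ s' _ hss'
    refine disjoint_left.2 fun x hx hx' => hss' (hdisj x ?_ ?_)
    · exact (mem_filter.1 hx).2.symm.dvd
    · exact (mem_filter.1 hx').2.symm.dvd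
  calc ∑ s, L / n s = ∑ s, #(A s) :=
        sum_congr rfl fun s _ => (Int.card_filter_Ico_modEq_of_dvd (hn s) (hnL s) (a s)).symm
    _ = #(univ.biUnion A) := (card_biUnion hA).symm
    _ ≤ #(Ico (0 : ℤ) L) := card_le_card (biUnion_subset.2 fun s _ => filter_subset _ _)
    _ = L := by simp

theorem Polynomial.X_pow_sub_one_dvd_of_eval_pow_eq_zero {R : Type*} [CommRing R] [IsDomain R]
    {ζ : R} {L : ℕ} (hL : 0 < L) (hζ : IsPrimitiveRoot ζ L) {p : R[X]}
    (hp : ∀ j : ℕ, p.eval (ζ ^ j) = 0) : X ^ L - 1 ∣ p := by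
  rcases eq_or_ne p 0 with rfl | hp0
  · exact dvd_zero _
  have := NeZero.of_pos hL
  rw [X_pow_sub_one_eq_prod hL hζ, Finset.prod_eq_multiset_prod,
    Multiset.prod_X_sub_C_dvd_iff_le_roots hp0, Multiset.le_iff_subset (Finset.nodup _)]
  intro μ hμ
  obtain ⟨j, -, rfl⟩ := hζ.eq_pow_of_pow_eq_one ((mem_nthRootsFinset hL 1).1 hμ)
  exact (mem_roots hp0).2 (hp j)

theorem Polynomial.eq_one_sub_X_pow_of_X_pow_sub_one_dvd {R : Type*} [CommRing R] [Nontrivial R]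
    {L : ℕ} (hL : 0 < L) {p : R[X]} (hdvd : X ^ L - 1 ∣ p) (hdeg : p.natDegree ≤ L)
    (h0 : p.eval 0 = 1) : p = 1 - X ^ L := by
  have hmonic : (X ^ L - 1 : R[X]).Monic := by simpa using monic_X_pow_sub_C (1 : R) hL.ne'
  have hnat : (X ^ L - 1 : R[X]).natDegree = L := by
    simpa using natDegree_X_pow_sub_C (R := R) (n := L) (r := 1)
  have hp := eq_leadingCoeff_mul_of_monic_of_dvd_of_natDegree_le hmonic hdvd (hdeg.trans hnat.ge)
  have hlc : p.leadingCoeff = -1 := by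
    have := congrArg (eval 0) hp
    simp only [h0, eval_mul, eval_C, eval_sub, eval_pow, eval_X, zero_pow hL.ne', eval_one,
      zero_sub, mul_neg, mul_one] at this
    linear_combination this
  rw [hp, hlc]
  simp only [map_neg, map_one]
  ring

theorem Polynomial.coeff_geom_sum_C_mul_X_pow {R : Type*} [CommSemiring R] (c : R) {m N r : ℕ}
    (hm : 0 < m) (hr : r < N) : (∑ i ∈ range N, (C c * X ^ m) ^ i).coeff (m * r) = c ^ r := by
  simp_rw [mul_pow, ← C_pow, ← pow_mul, finsetSum_coeff, coeff_C_mul_X_pow]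
  rw [Finset.sum_eq_single_of_mem r (mem_range.2 hr)]
  · simp
  · intro i _ hir
    rw [if_neg (fun h => hir (Nat.eq_of_mul_eq_mul_left hm h).symm)]

theorem prod_erase_one_sub_eq_geom_sum {ι R : Type*} [CommRing R] [NoZeroDivisors R]
    [DecidableEq ι] {S : Finset ι} {t : ι} (ht : t ∈ S) (x : ι → R) {y : R} {N : ℕ}
    (hprod : ∏ s ∈ S, (1 - x s) = 1 - y) (hxt : x t ^ N = y) (hne : 1 - x t ≠ 0) :
    ∏ s ∈ S.erase t, (1 - x s) = ∑ i ∈ range N, x t ^ i := by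
  apply mul_left_cancel₀ hne
  rw [mul_prod_erase S (fun s => 1 - x s) ht, hprod, mul_neg_geom_sum, hxt]

theorem Polynomial.exists_subset_sum_eq_of_coeff_prod_ne_zero {ι R : Type*} [CommRing R]
    [DecidableEq ι] (S : Finset ι) (c : ι → R) (m : ι → ℕ) {d : ℕ}
    (h : (∏ s ∈ S, (1 - C (c s) * X ^ m s)).coeff d ≠ 0) : ∃ I ⊆ S, ∑ s ∈ I, m s = d := by
  have hexpand : ∏ s ∈ S, (1 - C (c s) * X ^ m s)
      = ∑ I ∈ S.powerset, C (∏ s ∈ I, -c s) * X ^ (∑ s ∈ I, m s) := by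
    simp_rw [sub_eq_neg_add, add_comm _ (1 : R[X]), ← neg_mul, ← map_neg, add_comm (1 : R[X]),
      prod_add, prod_const_one, mul_one, prod_mul_distrib, ← map_prod, prod_pow_eq_pow_sum]
  rw [hexpand, finsetSum_coeff] at h
  obtain ⟨I, hI, hcoeff⟩ := exists_ne_zero_of_sum_ne_zero h
  refine ⟨I, mem_powerset.1 hI, ?_⟩
  by_contra hne
  exact hcoeff (by rw [coeff_C_mul_X_pow, if_neg (Ne.symm hne)])

section RootOfUnity

variable {K : Type*} [Field K] {ζ : K} {L : ℕ}

theorem IsPrimitiveRoot.C_zpow_mul_X_pow_pow_eq (hζ : IsPrimitiveRoot ζ L) {n : ℕ} (hnL : n ∣ L)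
    (a : ℤ) : (C (ζ ^ (-a * (L / n : ℕ))) * X ^ (L / n)) ^ n = X ^ L := by
  have hz : (ζ ^ (-a * (L / n : ℕ))) ^ n = 1 := by
    rw [← zpow_natCast, ← zpow_mul, hζ.zpow_eq_one_iff_dvd]
    exact ⟨-a, by rw [mul_assoc, ← Nat.cast_mul, Nat.div_mul_cancel hnL]; ring⟩
  rw [mul_pow, ← C_pow, hz, C_1, one_mul, ← pow_mul, Nat.div_mul_cancel hnL]

theorem IsPrimitiveRoot.zpow_mul_pow_eq_one (hζ : IsPrimitiveRoot ζ L) (hL : 0 < L) {n : ℕ}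
    (hnL : n ∣ L) {a : ℤ} {j : ℕ} (hj : (n : ℤ) ∣ j - a) :
    ζ ^ (-a * (L / n : ℕ)) * (ζ ^ j) ^ (L / n) = 1 := by
  rw [← pow_mul, ← zpow_natCast, ← zpow_add₀ (hζ.ne_zero hL.ne'), hζ.zpow_eq_one_iff_dvd]
  have hL' : (L : ℤ) = n * (L / n : ℕ) := by exact_mod_cast (Nat.mul_div_cancel' hnL).symm
  rw [hL', show -a * (L / n : ℕ) + ((j * (L / n) : ℕ) : ℤ) = (j - a) * (L / n : ℕ) by
    push_cast; ring]
  exact mul_dvd_mul_right hj _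

theorem prod_one_sub_C_mul_X_pow_eq_one_sub_X_pow {ι : Type*} [Fintype ι] {a : ι → ℤ}
    {n : ι → ℕ} (hn : ∀ s, 0 < n s) (hcover : IsDisjointCover a n) (hL : 0 < L)
    (hnL : ∀ s, n s ∣ L) (hζ : IsPrimitiveRoot ζ L) :
    ∏ s, (1 - C (ζ ^ (-a s * (L / n s : ℕ))) * X ^ (L / n s)) = 1 - X ^ L := by
  have hm : ∀ s, 0 < L / n s := fun s => Nat.div_pos (Nat.le_of_dvd hL (hnL s)) (hn s)
  apply eq_one_sub_X_pow_of_X_pow_sub_one_dvd hL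
  · refine X_pow_sub_one_dvd_of_eval_pow_eq_zero hL hζ fun j => ?_
    obtain ⟨s, hs, -⟩ := hcover j
    rw [eval_prod]
    refine prod_eq_zero (mem_univ s) ?_
    simp only [eval_sub, eval_one, eval_mul, eval_C, eval_pow, eval_X,
      hζ.zpow_mul_pow_eq_one hL (hnL s) hs, sub_self]
  · refine (natDegree_prod_le _ _).trans <| (sum_le_sum fun s _ => ?_).trans <|
      sum_div_le_of_disjoint_classes hn (fun x _ hs _ hs' => (hcover x).unique hs hs') hnL
    exact (natDegree_sub_le _ _).trans (max_le (by simp) (natDegree_C_mul_X_pow_le _ _))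
  · rw [eval_prod]
    exact prod_eq_one fun s _ => by simp [zero_pow (hm s).ne']

end RootOfUnity

theorem stmt_3 (k : ℕ) (a : Fin k → ℤ) (n : Fin k → ℕ) (hn : ∀ s, 0 < n s)
    (hcover : ∀ x : ℤ, ∃! s : Fin k, (n s : ℤ) ∣ x - a s)
    (t : Fin k) (r : ℕ) (hr : r < n t) :
    ∃ I : Finset (Fin k), t ∉ I ∧
      ∑ s ∈ I, (1 : ℚ) / n s = (r : ℚ) / n t := by
  set L := univ.lcm n
  have hnL : ∀ s, n s ∣ L := fun s => dvd_lcm (mem_univ s)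
  have hL : 0 < L := Nat.pos_of_ne_zero fun h => by
    obtain ⟨s, -, hs⟩ := lcm_eq_zero_iff.1 h
    exact (hn s).ne' hs
  obtain ⟨ζ, hζ⟩ : ∃ ζ : ℂ, IsPrimitiveRoot ζ L := ⟨_, Complex.isPrimitiveRoot_exp L hL.ne'⟩
  set z : Fin k → ℂ := fun s => ζ ^ (-a s * (L / n s : ℕ))
  have hmt : 0 < L / n t := Nat.div_pos (Nat.le_of_dvd hL (hnL t)) (hn t)
  have hgeom := prod_erase_one_sub_eq_geom_sum (mem_univ t) (fun s => C (z s) * X ^ (L / n s))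
    (prod_one_sub_C_mul_X_pow_eq_one_sub_X_pow hn hcover hL hnL hζ)
    (hζ.C_zpow_mul_X_pow_pow_eq (hnL t) (a t))
    (fun h => by simpa [zero_pow hmt.ne'] using congrArg (eval 0) h)
  obtain ⟨I, hIt, hI⟩ := exists_subset_sum_eq_of_coeff_prod_ne_zero (univ.erase t) z
    (fun s => L / n s) (d := L / n t * r) <| by
      rw [hgeom, coeff_geom_sum_C_mul_X_pow _ hmt hr]
      exact pow_ne_zero _ (zpow_ne_zero _ (hζ.ne_zero hL.ne'))
  refine ⟨I, fun ht => by simpa using hIt ht, ?_⟩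
  have hinv : ∀ s, (1 : ℚ) / n s = ((L / n s : ℕ) : ℚ) / L := fun s => by
    have : (n s : ℚ) ≠ 0 := by exact_mod_cast (hn s).ne'
    rw [Nat.cast_div (hnL s) this]
    field_simp
  calc ∑ s ∈ I, (1 : ℚ) / n s = ((∑ s ∈ I, L / n s : ℕ) : ℚ) / L := by
        simp only [hinv, Nat.cast_sum, sum_div]
    _ = r / n t := by rw [hI, Nat.cast_mul, mul_div_right_comm, ← hinv]; ring
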